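/- arXiv:2305.08100 — 3 statements merged into one kernel-verified Lean document; each statement's English description precedes it below -/
import Mathlib

section
/- Let H₁ and H₂ be complex Hilbert spaces, T : H₁ → H₂ a bounded linear operator with adjoint T*, α > 0 a real number, and v ∈ H₂. Then the operator αI + TT* on H₂ is boundedly invertible, and u* := T*(αI + TT*)⁻¹ v is the unique minimizer over u ∈ H₁ of the functional u ↦ α‖u‖² + ‖Tu − v‖²; that is, for every u ∈ H₁ one has α‖u*‖² + ‖Tu* − v‖² ≤ α‖u‖² + ‖Tu − v‖², with equality only if u = u*. -/
/-!
Since `TT*` is a positive operator, `αI + TT*` is strictly positive in the C⋆-algebra of bounded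
operators on `H₂`, hence invertible. Expanding the Tikhonov functional `J` around any `u₀` gives
`J (u₀ + w) = J u₀ + 2 re ⟪α u₀ + T* (T u₀ - v), w⟫ + α ‖w‖² + ‖T w‖²`. For `u₀ = T* y` with
`(αI + TT*) y = v` the gradient `α u₀ + T* (T u₀ - v) = T* ((αI + TT*) y - v)` vanishes, so
`J (u₀ + w) - J u₀ = α ‖w‖² + ‖T w‖²`, which is nonnegative and zero only for `w = 0`.
-/

open scoped InnerProductSpace
open ContinuousLinearMap

namespace Tikhonov

theorem isUnit_smul_one_add_comp_adjoint {H₁ H₂ : Type*}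
    [NormedAddCommGroup H₁] [InnerProductSpace ℂ H₁] [CompleteSpace H₁]
    [NormedAddCommGroup H₂] [InnerProductSpace ℂ H₂] [CompleteSpace H₂]
    (T : H₁ →L[ℂ] H₂) {α : ℝ} (hα : 0 < α) :
    IsUnit ((α : ℂ) • (1 : H₂ →L[ℂ] H₂) + T ∘L adjoint T) := by
  have hTT : 0 ≤ T ∘L adjoint T := (nonneg_iff_isPositive _).mpr (isPositive_self_comp_adjoint T)
  have hα' : (α : ℂ) • (1 : H₂ →L[ℂ] H₂) = algebraMap ℝ (H₂ →L[ℂ] H₂) α := by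
    rw [Algebra.algebraMap_eq_smul_one, ← Complex.coe_smul]
  rw [hα']
  exact ((isStrictlyPositive_algebraMap hα).add_nonneg hTT).isUnit

variable {𝕜 E F : Type*} [RCLike 𝕜]
  [NormedAddCommGroup E] [InnerProductSpace 𝕜 E] [CompleteSpace E]
  [NormedAddCommGroup F] [InnerProductSpace 𝕜 F] [CompleteSpace F]

def functional (T : E →L[𝕜] F) (α : ℝ) (v : F) (u : E) : ℝ :=
  α * ‖u‖ ^ 2 + ‖T u - v‖ ^ 2

theorem functional_add (T : E →L[𝕜] F) (α : ℝ) (v : F) (u w : E) :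
    functional T α v (u + w) = functional T α v u
      + 2 * RCLike.re ⟪(α : 𝕜) • u + adjoint T (T u - v), w⟫_𝕜 + (α * ‖w‖ ^ 2 + ‖T w‖ ^ 2) := by
  have hT : T (u + w) - v = (T u - v) + T w := by rw [map_add]; abel
  rw [functional, functional, hT, norm_add_sq (𝕜 := 𝕜), norm_add_sq (𝕜 := 𝕜), inner_add_left,
    inner_smul_left, RCLike.conj_ofReal, adjoint_inner_left, map_add, RCLike.re_ofReal_mul]
  ring

theorem functional_add_of_gradient_eq_zero (T : E →L[𝕜] F) (α : ℝ) (v : F) {u₀ : E}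
    (hu₀ : (α : 𝕜) • u₀ + adjoint T (T u₀ - v) = 0) (w : E) :
    functional T α v (u₀ + w) = functional T α v u₀ + (α * ‖w‖ ^ 2 + ‖T w‖ ^ 2) := by
  rw [functional_add, hu₀, inner_zero_left, map_zero, mul_zero, add_zero]

theorem functional_le_of_gradient_eq_zero (T : E →L[𝕜] F) {α : ℝ} (hα : 0 ≤ α) (v : F) {u₀ : E}
    (hu₀ : (α : 𝕜) • u₀ + adjoint T (T u₀ - v) = 0) (u : E) :
    functional T α v u₀ ≤ functional T α v u := by
  rw [← add_sub_cancel u₀ u, functional_add_of_gradient_eq_zero T α v hu₀]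
  have := mul_nonneg hα (sq_nonneg ‖u - u₀‖)
  have := sq_nonneg ‖T (u - u₀)‖
  linarith

theorem eq_of_functional_eq_of_gradient_eq_zero (T : E →L[𝕜] F) {α : ℝ} (hα : 0 < α) (v : F)
    {u₀ : E} (hu₀ : (α : 𝕜) • u₀ + adjoint T (T u₀ - v) = 0) {u : E}
    (h : functional T α v u₀ = functional T α v u) :
    u = u₀ := by
  rw [← add_sub_cancel u₀ u, functional_add_of_gradient_eq_zero T α v hu₀] at h
  have hsq : ‖u - u₀‖ ^ 2 = 0 := by
    nlinarith [sq_nonneg ‖u - u₀‖, sq_nonneg ‖T (u - u₀)‖]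
  simpa [sub_eq_zero] using hsq

theorem gradient_adjoint_apply (T : E →L[𝕜] F) (α : ℝ) (v : F) {A : F →L[𝕜] F}
    (hA : A = (α : 𝕜) • (1 : F →L[𝕜] F) + T ∘L adjoint T) (y : F) :
    (α : 𝕜) • adjoint T y + adjoint T (T (adjoint T y) - v) = adjoint T (A y - v) := by
  simp only [hA, add_apply, smul_apply, one_apply_eq_self, comp_apply, map_sub, map_add, map_smul]
  abel

end Tikhonov

/-- Tikhonov-regularized least squares: `αI + TT*` is boundedly invertible
and `u* = T*(αI + TT*)⁻¹ v` is the unique minimizer of `u ↦ α‖u‖² + ‖Tu - v‖²`. -/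
theorem stmt_0
    {H₁ H₂ : Type*} [NormedAddCommGroup H₁] [InnerProductSpace ℂ H₁] [CompleteSpace H₁]
    [NormedAddCommGroup H₂] [InnerProductSpace ℂ H₂] [CompleteSpace H₂]
    (T : H₁ →L[ℂ] H₂) (α : ℝ) (hα : 0 < α) (v : H₂)
    (A : H₂ →L[ℂ] H₂)
    (hA : A = (α : ℂ) • (1 : H₂ →L[ℂ] H₂) + T ∘L ContinuousLinearMap.adjoint T)
    (uStar : H₁)
    (huStar : uStar = (ContinuousLinearMap.adjoint T) (Ring.inverse A v)) :
    IsUnit A ∧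
    ∀ u : H₁,
      (α * ‖uStar‖ ^ 2 + ‖T uStar - v‖ ^ 2 ≤ α * ‖u‖ ^ 2 + ‖T u - v‖ ^ 2) ∧
      (α * ‖uStar‖ ^ 2 + ‖T uStar - v‖ ^ 2 = α * ‖u‖ ^ 2 + ‖T u - v‖ ^ 2 → u = uStar) := by
  have hUnit : IsUnit A := hA ▸ Tikhonov.isUnit_smul_one_add_comp_adjoint T hα
  have hAinv : A (Ring.inverse A v) = v := by
    rw [← mul_apply_eq_comp, Ring.mul_inverse_cancel A hUnit, one_apply_eq_self]
  have hgrad : (α : ℂ) • uStar + adjoint T (T uStar - v) = 0 := by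
    rw [huStar]
    -- `(α : 𝕜)` at `𝕜 = ℂ` is only definitionally `(α : ℂ)`, so `rw` cannot use this lemma.
    exact (Tikhonov.gradient_adjoint_apply T α v hA _).trans (by rw [hAinv, sub_self, map_zero])
  exact ⟨hUnit, fun u => ⟨Tikhonov.functional_le_of_gradient_eq_zero T hα.le v hgrad u,
    Tikhonov.eq_of_functional_eq_of_gradient_eq_zero T hα v hgrad⟩⟩
end

section
/- Let H₁ and H₂ be complex Hilbert spaces, T : H₁ → H₂ a bounded linear operator with adjoint T*, α > 0, and φ ∈ H₂. Then α‖T*(αI + TT*)⁻¹ φ‖²_{H₁} + ‖TT*(αI + TT*)⁻¹ φ‖²_{H₂} = ⟨φ, TT*(αI + TT*)⁻¹ φ⟩_{H₂}, and this quantity is at most ‖φ‖²_{H₂}. -/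
open scoped InnerProductSpace

/-- `α‖T*(αI+TT*)⁻¹φ‖² + ‖TT*(αI+TT*)⁻¹φ‖² = ⟨φ, TT*(αI+TT*)⁻¹φ⟩ ≤ ‖φ‖²`. -/
theorem stmt_5
    {H₁ H₂ : Type*} [NormedAddCommGroup H₁] [InnerProductSpace ℂ H₁] [CompleteSpace H₁]
    [NormedAddCommGroup H₂] [InnerProductSpace ℂ H₂] [CompleteSpace H₂]
    (T : H₁ →L[ℂ] H₂) (α : ℝ) (hα : 0 < α) (φ : H₂)
    (A : H₂ →L[ℂ] H₂)
    (hA : A = (α : ℂ) • (1 : H₂ →L[ℂ] H₂) + T ∘L ContinuousLinearMap.adjoint T) :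
    ((α * ‖(ContinuousLinearMap.adjoint T) (Ring.inverse A φ)‖ ^ 2
        + ‖(T ∘L ContinuousLinearMap.adjoint T) (Ring.inverse A φ)‖ ^ 2 : ℝ) : ℂ)
      = ⟪φ, (T ∘L ContinuousLinearMap.adjoint T) (Ring.inverse A φ)⟫_ℂ ∧
    α * ‖(ContinuousLinearMap.adjoint T) (Ring.inverse A φ)‖ ^ 2
        + ‖(T ∘L ContinuousLinearMap.adjoint T) (Ring.inverse A φ)‖ ^ 2
      ≤ ‖φ‖ ^ 2 := by
  set ψ := Ring.inverse A φ with hψ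
  by_cases hu : IsUnit A
  · have hφ : A ψ = φ := by
      have h := Ring.mul_inverse_cancel A hu
      have : (A * Ring.inverse A) φ = φ := by rw [h]; rfl
      simpa [ContinuousLinearMap.mul_apply] using this
    have key : ((α * ‖(ContinuousLinearMap.adjoint T) ψ‖ ^ 2
        + ‖(T ∘L ContinuousLinearMap.adjoint T) ψ‖ ^ 2 : ℝ) : ℂ)
        = ⟪φ, (T ∘L ContinuousLinearMap.adjoint T) ψ⟫_ℂ := by
      conv_rhs => rw [← hφ, hA]
      rw [ContinuousLinearMap.add_apply, ContinuousLinearMap.smul_apply,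
        inner_add_left, inner_smul_left, ContinuousLinearMap.one_apply,
        ContinuousLinearMap.comp_apply,
        ← ContinuousLinearMap.adjoint_inner_left T (ContinuousLinearMap.adjoint T ψ) ψ,
        inner_self_eq_norm_sq_to_K, inner_self_eq_norm_sq_to_K, Complex.conj_ofReal]
      push_cast
      with_unfolding_all rfl
    refine ⟨key, ?_⟩
    have hre : α * ‖(ContinuousLinearMap.adjoint T) ψ‖ ^ 2
        + ‖(T ∘L ContinuousLinearMap.adjoint T) ψ‖ ^ 2
        = RCLike.re ⟪φ, (T ∘L ContinuousLinearMap.adjoint T) ψ⟫_ℂ := by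
      rw [← key]; exact (Complex.ofReal_re _).symm
    have hle : RCLike.re ⟪φ, (T ∘L ContinuousLinearMap.adjoint T) ψ⟫_ℂ
        ≤ ‖φ‖ * ‖(T ∘L ContinuousLinearMap.adjoint T) ψ‖ := re_inner_le_norm _ _
    have h1 : 0 ≤ α * ‖(ContinuousLinearMap.adjoint T) ψ‖ ^ 2 :=
      mul_nonneg hα.le (sq_nonneg _)
    nlinarith [norm_nonneg ((T ∘L ContinuousLinearMap.adjoint T) ψ), norm_nonneg φ,
      sq_nonneg (‖φ‖ - ‖(T ∘L ContinuousLinearMap.adjoint T) ψ‖)]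
  · have : ψ = 0 := by rw [hψ, Ring.inverse_non_unit A hu]; rfl
    rw [this]
    simp
end

section
/- Let H be a complex Hilbert space with orthonormal basis (eᵢ)_{i∈ℕ}, let (λᵢ)_{i∈ℕ} be a bounded sequence of positive reals with λ₋ := inf_i λᵢ and λ₊ := sup_i λᵢ, and let A φ = Σᵢ λᵢ ⟨eᵢ, φ⟩ eᵢ. For α > 0 and φ ∈ H define the approximation error err := ‖φ‖² − ⟨φ, A(αI + A)⁻¹ φ⟩. Then err = Σᵢ (α/(α + λᵢ)) |⟨eᵢ, φ⟩|², and consequently (α/(α + λ₊)) ‖φ‖² ≤ err ≤ (α/(α + λ₋)) ‖φ‖². In particular, as λ₋ → ∞ the error tends to 0, i.e., the projection onto the graph approximates (0, φ) arbitrarily well. -/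
/-!
In the coordinates of `e`, the operator `A` multiplies by `λᵢ`, so `αI + A` multiplies by
`α + λᵢ ≥ α > 0`; it is therefore invertible, with inverse the multiplication by `(α + λᵢ)⁻¹`.
Since `A = (αI + A) - αI`, the error equals `α ⟨φ, (αI + A)⁻¹ φ⟩`, which is
`Σᵢ α/(α + λᵢ) |⟨eᵢ, φ⟩|²` by Parseval. The bounds follow termwise from `λ₋ ≤ λᵢ ≤ λ₊` and
`Σᵢ |⟨eᵢ, φ⟩|² = ‖φ‖²`.
-/

open scoped InnerProductSpace

theorem Memℓp.mul_of_norm_le {α 𝕜 : Type*} [NormedRing 𝕜] {p : ENNReal} {f g : α → 𝕜} {C : ℝ}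
    (hf : ∀ i, ‖f i‖ ≤ C) (hg : Memℓp g p) : Memℓp (fun i => f i * g i) p :=
  (hg.norm.const_mul C).mono fun i =>
    (norm_mul_le _ _).trans (mul_le_mul_of_nonneg_right (hf i) (norm_nonneg _))

namespace HilbertBasis

variable {ι 𝕜 E : Type*} [RCLike 𝕜] [NormedAddCommGroup E] [InnerProductSpace 𝕜 E]
  (b : HilbertBasis ι 𝕜 E)

theorem inner_tsum_smul {f : ι → 𝕜} (hf : Memℓp f 2) (i : ι) :
    ⟪b i, ∑' j, f j • b j⟫_𝕜 = f i := by
  rw [(b.hasSum_repr_symm ⟨f, hf⟩).tsum_eq, ← b.repr_apply_apply,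
    LinearIsometryEquiv.apply_symm_apply]

def IsDiagonal (T : E →L[𝕜] E) (μ : ι → 𝕜) : Prop :=
  ∀ x i, ⟪b i, T x⟫_𝕜 = μ i * ⟪b i, x⟫_𝕜

variable {b}

theorem isDiagonal_of_apply_eq_tsum {T : E →L[𝕜] E} {μ : ι → 𝕜} {C : ℝ} (hμ : ∀ i, ‖μ i‖ ≤ C)
    (hT : ∀ x, T x = ∑' i, (μ i * ⟪b i, x⟫_𝕜) • b i) : b.IsDiagonal T μ := fun x i => by
  rw [hT, b.inner_tsum_smul]
  simpa only [b.repr_apply_apply] using (lp.memℓp (b.repr x)).mul_of_norm_le hμ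

theorem isDiagonal_one : b.IsDiagonal 1 fun _ => 1 := fun x i => by simp

theorem IsDiagonal.smul {T : E →L[𝕜] E} {μ : ι → 𝕜} (hT : b.IsDiagonal T μ) (c : 𝕜) :
    b.IsDiagonal (c • T) (c • μ) := fun x i => by
  simp [hT x i, inner_smul_right, mul_assoc]

theorem IsDiagonal.add {S T : E →L[𝕜] E} {μ ν : ι → 𝕜} (hS : b.IsDiagonal S μ)
    (hT : b.IsDiagonal T ν) : b.IsDiagonal (S + T) (μ + ν) := fun x i => by
  simp [inner_add_right, hS x i, hT x i, add_mul]

theorem IsDiagonal.isUnit [CompleteSpace E] {T : E →L[𝕜] E} {μ : ι → 𝕜} {δ : ℝ}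
    (hT : b.IsDiagonal T μ) (hδ : 0 < δ) (hμ : ∀ i, δ ≤ ‖μ i‖) : IsUnit T := by
  have hμ0 (i : ι) : μ i ≠ 0 := norm_pos_iff.mp (hδ.trans_le (hμ i))
  refine T.isUnit_iff_bijective.mpr ⟨fun x y hxy => b.repr.injective ?_, fun y => ?_⟩
  · ext i
    simpa [b.repr_apply_apply, hT _ i, hμ0 i] using congr(⟪b i, $hxy⟫_𝕜)
  · have hinv (i : ι) : ‖(μ i)⁻¹‖ ≤ δ⁻¹ := by
      rw [norm_inv]; exact inv_anti₀ hδ (hμ i)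
    have hmem := (lp.memℓp (b.repr y)).mul_of_norm_le hinv
    refine ⟨∑' j, ((μ j)⁻¹ * ⟪b j, y⟫_𝕜) • b j, b.repr.injective ?_⟩
    ext i
    rw [b.repr_apply_apply, b.repr_apply_apply, hT, b.inner_tsum_smul, mul_inv_cancel_left₀ (hμ0 i)]
    simpa only [b.repr_apply_apply] using hmem

theorem IsDiagonal.ring_inverse {T : E →L[𝕜] E} {μ : ι → 𝕜} (hT : b.IsDiagonal T μ)
    (hu : IsUnit T) : b.IsDiagonal (Ring.inverse T) fun i => (μ i)⁻¹ := fun x i => by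
  have hTT (y : E) : T (Ring.inverse T y) = y := congr($(Ring.mul_inverse_cancel T hu) y)
  have hμ0 : μ i ≠ 0 := by
    intro h
    apply b.orthonormal.ne_zero i
    simpa [h] using congr(⟪b i, $(hTT (b i))⟫_𝕜).symm.trans (hT _ i)
  rw [eq_inv_mul_iff_mul_eq₀ hμ0, ← hT, hTT]

theorem IsDiagonal.hasSum_re_inner_self {T : E →L[𝕜] E} {ν : ι → ℝ}
    (hT : b.IsDiagonal T fun i => (ν i : 𝕜)) (x : E) :
    HasSum (fun i => ν i * ‖⟪b i, x⟫_𝕜‖ ^ 2) (RCLike.re ⟪x, T x⟫_𝕜) := by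
  refine ((b.hasSum_inner_mul_inner x (T x)).mapL RCLike.reCLM).congr_fun fun i => ?_
  simp only [RCLike.reCLM_apply, hT x i, ← inner_conj_symm x (b i)]
  rw [mul_left_comm, RCLike.conj_mul, ← RCLike.ofReal_pow, ← RCLike.ofReal_mul, RCLike.ofReal_re]

variable (b) in
theorem hasSum_norm_inner_sq (x : E) :
    HasSum (fun i => ‖⟪b i, x⟫_𝕜‖ ^ 2) (‖x‖ ^ 2) := by
  have h1 : b.IsDiagonal 1 fun _ => ((1 : ℝ) : 𝕜) := by simpa using isDiagonal_one
  simpa using h1.hasSum_re_inner_self x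

end HilbertBasis

theorem ContinuousLinearMap.norm_sq_sub_re_inner_apply_inverse_smul_one_add {𝕜 E : Type*}
    [RCLike 𝕜] [NormedAddCommGroup E] [InnerProductSpace 𝕜 E] {T : E →L[𝕜] E} {c : ℝ}
    (hu : IsUnit ((c : 𝕜) • 1 + T)) (x : E) :
    ‖x‖ ^ 2 - RCLike.re ⟪x, T (Ring.inverse ((c : 𝕜) • 1 + T) x)⟫_𝕜 =
      c * RCLike.re ⟪x, Ring.inverse ((c : 𝕜) • 1 + T) x⟫_𝕜 := by
  set y := Ring.inverse ((c : 𝕜) • 1 + T) x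
  have hy : (c : 𝕜) • y + T y = x := congr($(Ring.mul_inverse_cancel _ hu) x)
  rw [show T y = x - (c : 𝕜) • y by rw [← hy]; abel, inner_sub_right, inner_smul_right,
    map_sub, RCLike.re_ofReal_mul, inner_self_eq_norm_sq, sub_sub_cancel]

/-- the approximation error `err = ‖φ‖² − ⟨φ, A(αI+A)⁻¹φ⟩` satisfies
`err = Σᵢ (α/(α+λᵢ))|⟨eᵢ,φ⟩|²` and `(α/(α+λ₊))‖φ‖² ≤ err ≤ (α/(α+λ₋))‖φ‖²`. -/
theorem stmt_10
    {H : Type*} [NormedAddCommGroup H] [InnerProductSpace ℂ H] [CompleteSpace H]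
    (e : HilbertBasis ℕ ℂ H) (l : ℕ → ℝ) (hl : ∀ i, 0 < l i)
    (hbd : ∃ C : ℝ, ∀ i, l i ≤ C)
    (A : H →L[ℂ] H)
    (hA : ∀ φ : H, A φ = ∑' i, ((l i : ℂ) * ⟪e i, φ⟫_ℂ) • e i)
    (α : ℝ) (hα : 0 < α) (φ : H)
    (err : ℝ)
    (herr : err = ‖φ‖ ^ 2
      - (⟪φ, A (Ring.inverse ((α : ℂ) • (1 : H →L[ℂ] H) + A) φ)⟫_ℂ).re) :
    err = ∑' i, (α / (α + l i)) * ‖⟪e i, φ⟫_ℂ‖ ^ 2 ∧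
    (α / (α + ⨆ i, l i)) * ‖φ‖ ^ 2 ≤ err ∧
    err ≤ (α / (α + ⨅ i, l i)) * ‖φ‖ ^ 2 := by
  obtain ⟨C, hC⟩ := hbd
  have hA_diag : e.IsDiagonal A fun i => (l i : ℂ) :=
    HilbertBasis.isDiagonal_of_apply_eq_tsum (C := C)
      (fun i => by simpa [abs_of_pos (hl i)] using hC i) hA
  have hB_diag : e.IsDiagonal ((α : ℂ) • 1 + A) fun i => ((α + l i : ℝ) : ℂ) := by
    convert (HilbertBasis.isDiagonal_one.smul (α : ℂ)).add hA_diag using 1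
    funext i
    simp
  have hB_unit := hB_diag.isUnit hα fun i => by
    rw [Complex.norm_real, Real.norm_of_nonneg (by linarith [hl i])]
    linarith [hl i]
  have hE : HasSum (fun i => α / (α + l i) * ‖⟪e i, φ⟫_ℂ‖ ^ 2) err := by
    have hinv : e.IsDiagonal (Ring.inverse ((α : ℂ) • 1 + A)) fun i => (((α + l i)⁻¹ : ℝ) : ℂ) := by
      simpa using hB_diag.ring_inverse hB_unit
    -- `trans` rather than `rw`: the lemma casts `α` by `RCLike.ofReal`, equal to
    -- `Complex.ofReal` only up to unfolding.
    rw [herr.trans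
      (ContinuousLinearMap.norm_sq_sub_re_inner_apply_inverse_smul_one_add hB_unit φ)]
    refine ((hinv.hasSum_re_inner_self (ν := fun i => (α + l i)⁻¹) φ).mul_left α).congr_fun
      fun i => ?_
    rw [div_eq_mul_inv, mul_assoc]
  have hP := (e.hasSum_norm_inner_sq φ).mul_left
  refine ⟨hE.tsum_eq.symm, hasSum_le (fun i => ?_) (hP _) hE, hasSum_le (fun i => ?_) hE (hP _)⟩
  · have hle_sup : l i ≤ ⨆ j, l j := le_ciSup ⟨C, Set.forall_mem_range.mpr hC⟩ i
    have hl_pos := hl i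
    gcongr
  · have hinf_le : ⨅ j, l j ≤ l i := ciInf_le ⟨0, Set.forall_mem_range.mpr fun j => (hl j).le⟩ i
    have hinf_nonneg : 0 ≤ ⨅ j, l j := le_ciInf fun j => (hl j).le
    gcongr
end
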